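/- arXiv:1911.03553 — 3 statements merged into one kernel-verified Lean document; each statement's English description precedes it below -/
import Mathlib

section
/- Define, as a function of ρ ∈ [0,1], V_A(ρ) = ∑_i (n_i/∑n_k)² σ²((1−ρ)/n_i + ρ) and V_B(ρ) = (1/N²)∑_i σ²((1−ρ)/n_i + ρ). Then V_A(ρ) < V_B(ρ) if and only if ρ < ((∑ 1/n_i)/N² − 1/∑ n_i) / ((∑ n_i²)/(∑ n_i)² + (∑ 1/n_i)/N² − 1/∑ n_i − 1/N), provided the n_i are not all equal (so the denominator is positive). -/
/-- Threshold rule: the naive mean has smaller variance than the normalized mean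
iff ρ is below the explicit threshold. -/
theorem variance_comparison_threshold (N : ℕ) (hN : 2 ≤ N) (n : Fin N → ℕ)
    (hpos : ∀ i, 0 < n i) (hne : ¬ ∀ i j, n i = n j) (σ2 : ℝ) (hσ : 0 < σ2)
    (ρ : ℝ) (hρ0 : 0 ≤ ρ) (hρ1 : ρ ≤ 1) :
    (∑ i, ((n i : ℝ) / ∑ k, (n k : ℝ)) ^ 2 * (σ2 * ((1 - ρ) / (n i : ℝ) + ρ)) <
        (1 / (N : ℝ) ^ 2) * ∑ i, σ2 * ((1 - ρ) / (n i : ℝ) + ρ)) ↔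
      ρ < ((∑ i, 1 / (n i : ℝ)) / (N : ℝ) ^ 2 - 1 / ∑ i, (n i : ℝ)) /
        ((∑ i, (n i : ℝ) ^ 2) / (∑ i, (n i : ℝ)) ^ 2 +
          (∑ i, 1 / (n i : ℝ)) / (N : ℝ) ^ 2 - 1 / (∑ i, (n i : ℝ)) - 1 / (N : ℝ)) := by
  have hNR : (0:ℝ) < N := by positivity
  have hni : ∀ i, (0:ℝ) < (n i : ℝ) := fun i => by exact_mod_cast hpos i
  set s : ℝ := ∑ i, (n i : ℝ) with hs_def
  set h : ℝ := ∑ i, 1 / (n i : ℝ) with hh_def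
  set q : ℝ := ∑ i, (n i : ℝ) ^ 2 with hq_def
  haveI : Nonempty (Fin N) := ⟨⟨0, by omega⟩⟩
  have hs : 0 < s := Finset.sum_pos (fun i _ => hni i) Finset.univ_nonempty
  push_neg at hne
  obtain ⟨i0, j0, hij⟩ := hne
  -- strict Cauchy-Schwarz : s^2 < N*q
  have term_eq : ∀ i : Fin N, ∑ j, ((n i : ℝ) - (n j : ℝ))^2
      = (N:ℝ) * (n i : ℝ)^2 - 2 * (n i : ℝ) * s + q := by
    intro i
    have e : ∀ j : Fin N, ((n i : ℝ) - (n j : ℝ))^2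
        = (n i : ℝ)^2 - (2 * (n i : ℝ)) * (n j : ℝ) + (n j : ℝ)^2 := fun j => by ring
    rw [Finset.sum_congr rfl fun j _ => e j, Finset.sum_add_distrib,
      Finset.sum_sub_distrib, Finset.sum_const, Finset.card_univ, Fintype.card_fin,
      ← Finset.mul_sum, nsmul_eq_mul, ← hs_def, ← hq_def]
  have expand : ∑ i, ∑ j, ((n i : ℝ) - (n j : ℝ))^2 = 2 * ((N:ℝ) * q - s^2) := by
    rw [Finset.sum_congr rfl fun i _ => term_eq i, Finset.sum_add_distrib,
      Finset.sum_sub_distrib, Finset.sum_const, Finset.card_univ, Fintype.card_fin,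
      ← Finset.mul_sum, nsmul_eq_mul, ← hq_def]
    have h1 : ∑ i, 2 * (n i : ℝ) * s = 2 * s * s := by
      rw [Finset.sum_congr rfl fun i _ => (by ring :
        2 * (n i : ℝ) * s = (2 * s) * (n i : ℝ)), ← Finset.mul_sum, ← hs_def]
    rw [h1]; ring
  have hpos_sum : 0 < ∑ i, ∑ j, ((n i : ℝ) - (n j : ℝ))^2 := by
    apply Finset.sum_pos' (fun i _ => Finset.sum_nonneg fun j _ => sq_nonneg _)
    refine ⟨i0, Finset.mem_univ _, ?_⟩
    apply Finset.sum_pos' (fun j _ => sq_nonneg _)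
    refine ⟨j0, Finset.mem_univ _, ?_⟩
    have hne' : (n i0 : ℝ) ≠ (n j0 : ℝ) := by exact_mod_cast hij
    exact pow_two_pos_of_ne_zero (sub_ne_zero_of_ne hne')
  have cs1 : s^2 < (N:ℝ) * q := by linarith [expand ▸ hpos_sum]
  -- Cauchy-Schwarz : N^2 ≤ s*h
  have cs2 : (N:ℝ)^2 ≤ s * h := by
    have := Finset.sum_sq_le_sum_mul_sum_of_sq_eq_mul Finset.univ
      (r := fun _ : Fin N => (1:ℝ)) (f := fun i => (n i : ℝ)) (g := fun i => 1 / (n i : ℝ))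
      (fun i _ => (hni i).le) (fun i _ => by positivity)
      (fun i _ => by rw [one_pow, mul_one_div, div_self (hni i).ne'])
    rw [hs_def, hh_def]
    simpa [Finset.card_univ, one_div] using this
  -- closed forms for the two sums
  have e1 : ∑ i, ((n i : ℝ) / s) ^ 2 * (σ2 * ((1 - ρ) / (n i : ℝ) + ρ))
      = σ2 * ((1 - ρ) * s + ρ * q) / s ^ 2 := by
    have e : ∀ i : Fin N, ((n i : ℝ) / s) ^ 2 * (σ2 * ((1 - ρ) / (n i : ℝ) + ρ))
        = ((σ2 * (1 - ρ)) * (n i : ℝ) + (σ2 * ρ) * (n i : ℝ)^2) / s ^ 2 := by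
      intro i
      have h0 : (n i : ℝ) ≠ 0 := (hni i).ne'
      have hs0 : s ≠ 0 := hs.ne'
      field_simp
    rw [Finset.sum_congr rfl fun i _ => e i, ← Finset.sum_div, Finset.sum_add_distrib,
      ← Finset.mul_sum, ← Finset.mul_sum, ← hs_def, ← hq_def]
    ring
  have e2 : (1 / (N:ℝ) ^ 2) * ∑ i, σ2 * ((1 - ρ) / (n i : ℝ) + ρ)
      = σ2 * ((1 - ρ) * h + ρ * N) / (N:ℝ) ^ 2 := by
    have e : ∀ i : Fin N, σ2 * ((1 - ρ) / (n i : ℝ) + ρ)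
        = (σ2 * (1 - ρ)) * (1 / (n i : ℝ)) + σ2 * ρ := fun i => by ring
    rw [Finset.sum_congr rfl fun i _ => e i, Finset.sum_add_distrib, ← Finset.mul_sum,
      Finset.sum_const, Finset.card_univ, Fintype.card_fin, nsmul_eq_mul, ← hh_def]
    ring
  rw [e1, e2]
  -- rewrite threshold with cleared denominators
  have hD' : 0 < q * (N:ℝ)^2 + h * s^2 - s * (N:ℝ)^2 - s^2 * (N:ℝ) := by nlinarith
  have hDth : (h / (N:ℝ)^2 - 1/s) / (q / s^2 + h / (N:ℝ)^2 - 1/s - 1/(N:ℝ))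
      = (h * s^2 - s * (N:ℝ)^2) / (q * (N:ℝ)^2 + h * s^2 - s * (N:ℝ)^2 - s^2 * (N:ℝ)) := by
    rw [show h * s^2 - s * (N:ℝ)^2 = (h / (N:ℝ)^2 - 1/s) * (s^2 * (N:ℝ)^2) by
        field_simp,
      show q * (N:ℝ)^2 + h * s^2 - s * (N:ℝ)^2 - s^2 * (N:ℝ)
          = (q / s^2 + h / (N:ℝ)^2 - 1/s - 1/(N:ℝ)) * (s^2 * (N:ℝ)^2) by
        field_simp,
      mul_div_mul_right _ _ (by positivity : s^2 * (N:ℝ)^2 ≠ 0)]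
  rw [hDth, lt_div_iff₀ hD', div_lt_div_iff₀ (by positivity) (by positivity)]
  constructor <;> intro H <;> nlinarith
end

section
/- (Theorem 1, S3 part) Under the model with users i = 1,...,N, user i having n_i ≥ 1 observations X_{ij} with mean 0, variance σ², within-user pairwise covariance ρσ², and independence across users: the statistic S_3 = (1/∑_i(n_i−1)) ∑_i ∑_{j≠j'} (X_{ij} − r_i)(X_{ij'} − r_i), where r_i = (1/n_i)∑_j X_{ij}, satisfies E[S_3] = (ρ − 1)σ². -/
open MeasureTheory

/-- Theorem 1 (S3 part): E[S₃] = (ρ - 1)σ² in the multi-user model. -/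
theorem expectation_S3 {Ω : Type*} [MeasurableSpace Ω] (P : Measure Ω)
    [IsProbabilityMeasure P] (N : ℕ) (n : Fin N → ℕ) (hn : ∀ i, 1 ≤ n i)
    (X : (i : Fin N) → Fin (n i) → Ω → ℝ) (σ2 ρ : ℝ)
    (hint1 : ∀ i j, Integrable (X i j) P)
    (hint2 : ∀ i j i' j', Integrable (fun ω => X i j ω * X i' j' ω) P)
    (hmean : ∀ i j, ∫ ω, X i j ω ∂P = 0)
    (hvar : ∀ i j, ∫ ω, (X i j ω) ^ 2 ∂P = σ2)
    (hcov : ∀ i, ∀ j j' : Fin (n i), j ≠ j' → ∫ ω, X i j ω * X i j' ω ∂P = ρ * σ2)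
    (hcross : ∀ i i', i ≠ i' → ∀ (j : Fin (n i)) (j' : Fin (n i')),
      ∫ ω, X i j ω * X i' j' ω ∂P = 0)
    (hpos : 0 < ∑ i, ((n i : ℝ) - 1)) :
    ∫ ω, (1 / ∑ i, ((n i : ℝ) - 1)) *
        ∑ i, ∑ j, ∑ j' ∈ Finset.univ.erase j,
          (X i j ω - (∑ k, X i k ω) / (n i : ℝ)) *
            (X i j' ω - (∑ k, X i k ω) / (n i : ℝ)) ∂P = (ρ - 1) * σ2 := by
  have hT : (∑ i, ((n i : ℝ) - 1)) ≠ 0 := ne_of_gt hpos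
  have hnn : ∀ i, ((n i : ℝ)) ≠ 0 := fun i => by
    have := hn i; positivity
  have hcard : ∀ i j, ((Finset.univ.erase (j : Fin (n i))).card : ℝ) = (n i : ℝ) - 1 := by
    intro i j
    rw [Finset.card_erase_of_mem (Finset.mem_univ j), Finset.card_univ, Fintype.card_fin,
      Nat.cast_sub (hn i), Nat.cast_one]
  -- integrability of X i j * S i
  have hXS : ∀ i j, Integrable (fun ω => X i j ω * ∑ k, X i k ω) P := by
    intro i j
    have h : (fun ω => X i j ω * ∑ k, X i k ω)
        = fun ω => ∑ k, X i j ω * X i k ω := by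
      funext ω; rw [Finset.mul_sum]
    rw [h]
    exact integrable_finset_sum _ fun k _ => hint2 i j i k
  have hSS : ∀ i, Integrable (fun ω => (∑ k, X i k ω) * (∑ k, X i k ω)) P := by
    intro i
    have h : (fun ω => (∑ k, X i k ω) * (∑ k, X i k ω))
        = fun ω => ∑ k, X i k ω * ∑ l, X i l ω := by
      funext ω; rw [Finset.sum_mul]
    rw [h]
    exact integrable_finset_sum _ fun k _ => hXS i k
  -- integral of X i j * S i
  have hIXS : ∀ i j, ∫ ω, X i j ω * ∑ k, X i k ω ∂P
      = σ2 + ((n i : ℝ) - 1) * (ρ * σ2) := by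
    intro i j
    have h : (fun ω => X i j ω * ∑ k, X i k ω)
        = fun ω => ∑ k, X i j ω * X i k ω := by
      funext ω; rw [Finset.mul_sum]
    rw [h, integral_finset_sum _ fun k _ => hint2 i j i k,
      ← Finset.add_sum_erase _ _ (Finset.mem_univ j)]
    have h1 : ∫ ω, X i j ω * X i j ω ∂P = σ2 := by
      simpa [pow_two] using hvar i j
    have h2 : ∑ k ∈ Finset.univ.erase j, ∫ ω, X i j ω * X i k ω ∂P
        = ((n i : ℝ) - 1) * (ρ * σ2) := by
      rw [Finset.sum_congr rfl fun k hk =>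
        hcov i j k (Ne.symm (Finset.ne_of_mem_erase hk)), Finset.sum_const,
        nsmul_eq_mul, hcard i j]
    rw [h1, h2]
  have hISS : ∀ i, ∫ ω, (∑ k, X i k ω) * (∑ k, X i k ω) ∂P
      = (n i : ℝ) * (σ2 + ((n i : ℝ) - 1) * (ρ * σ2)) := by
    intro i
    have h : (fun ω => (∑ k, X i k ω) * (∑ k, X i k ω))
        = fun ω => ∑ k, X i k ω * ∑ l, X i l ω := by
      funext ω; rw [Finset.sum_mul]
    rw [h, integral_finset_sum _ fun k _ => hXS i k]
    rw [Finset.sum_congr rfl fun k _ => hIXS i k, Finset.sum_const, nsmul_eq_mul,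
      Finset.card_univ, Fintype.card_fin]
  -- the generic term
  have hexp : ∀ i (j j' : Fin (n i)),
      (fun ω => (X i j ω - (∑ k, X i k ω) / (n i : ℝ)) *
        (X i j' ω - (∑ k, X i k ω) / (n i : ℝ)))
      = fun ω => X i j ω * X i j' ω
          - (1 / (n i : ℝ)) * (X i j ω * ∑ k, X i k ω)
          - (1 / (n i : ℝ)) * (X i j' ω * ∑ k, X i k ω)
          + (1 / (n i : ℝ)) * ((1 / (n i : ℝ)) * ((∑ k, X i k ω) * (∑ k, X i k ω))) := by
    intro i j j'
    funext ω; ring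
  have hintterm : ∀ i (j j' : Fin (n i)),
      Integrable (fun ω => (X i j ω - (∑ k, X i k ω) / (n i : ℝ)) *
        (X i j' ω - (∑ k, X i k ω) / (n i : ℝ))) P := by
    intro i j j'
    rw [hexp i j j']
    exact (((hint2 i j i j').sub ((hXS i j).const_mul _)).sub
      ((hXS i j').const_mul _)).add (((hSS i).const_mul _).const_mul _)
  have hIterm : ∀ i (j j' : Fin (n i)), j ≠ j' →
      ∫ ω, (X i j ω - (∑ k, X i k ω) / (n i : ℝ)) *
        (X i j' ω - (∑ k, X i k ω) / (n i : ℝ)) ∂P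
      = ρ * σ2 - (σ2 + ((n i : ℝ) - 1) * (ρ * σ2)) / (n i : ℝ) := by
    intro i j j' hne
    rw [hexp i j j']
    have i1 : Integrable (fun ω => X i j ω * X i j' ω) P := hint2 i j i j'
    have i2 : Integrable (fun ω => (1 / (n i : ℝ)) * (X i j ω * ∑ k, X i k ω)) P :=
      (hXS i j).const_mul _
    have i3 : Integrable (fun ω => (1 / (n i : ℝ)) * (X i j' ω * ∑ k, X i k ω)) P :=
      (hXS i j').const_mul _
    have i4 : Integrable (fun ω => (1 / (n i : ℝ)) *
        ((1 / (n i : ℝ)) * ((∑ k, X i k ω) * (∑ k, X i k ω)))) P :=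
      ((hSS i).const_mul _).const_mul _
    have i12 : Integrable (fun ω => X i j ω * X i j' ω
        - (1 / (n i : ℝ)) * (X i j ω * ∑ k, X i k ω)) P := i1.sub i2
    have i123 : Integrable (fun ω => X i j ω * X i j' ω
        - (1 / (n i : ℝ)) * (X i j ω * ∑ k, X i k ω)
        - (1 / (n i : ℝ)) * (X i j' ω * ∑ k, X i k ω)) P := i12.sub i3
    rw [integral_add i123 i4, integral_sub i12 i3, integral_sub i1 i2,
      integral_const_mul, integral_const_mul, integral_const_mul, integral_const_mul,
      hcov i j j' hne, hIXS i j, hIXS i j', hISS i]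
    field_simp [hnn i]
    ring
  -- sum over j' then j
  have hinner : ∀ i, ∫ ω, ∑ j, ∑ j' ∈ Finset.univ.erase j,
      (X i j ω - (∑ k, X i k ω) / (n i : ℝ)) *
        (X i j' ω - (∑ k, X i k ω) / (n i : ℝ)) ∂P
      = ((n i : ℝ) - 1) * ((ρ - 1) * σ2) := by
    intro i
    rw [integral_finset_sum _ fun j _ =>
      integrable_finset_sum _ fun j' _ => hintterm i j j']
    have h : ∀ j : Fin (n i), ∫ ω, ∑ j' ∈ Finset.univ.erase j,
        (X i j ω - (∑ k, X i k ω) / (n i : ℝ)) *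
          (X i j' ω - (∑ k, X i k ω) / (n i : ℝ)) ∂P
        = ((n i : ℝ) - 1) * (ρ * σ2 - (σ2 + ((n i : ℝ) - 1) * (ρ * σ2)) / (n i : ℝ)) := by
      intro j
      rw [integral_finset_sum _ fun j' _ => hintterm i j j']
      rw [Finset.sum_congr rfl fun j' hj' =>
        hIterm i j j' (Ne.symm (Finset.ne_of_mem_erase hj')),
        Finset.sum_const, nsmul_eq_mul, hcard i j]
    rw [Finset.sum_congr rfl fun j _ => h j, Finset.sum_const, nsmul_eq_mul,
      Finset.card_univ, Fintype.card_fin]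
    have h0 : (n i : ℝ) ≠ 0 := hnn i
    field_simp
    ring
  calc ∫ ω, (1 / ∑ i, ((n i : ℝ) - 1)) *
        ∑ i, ∑ j, ∑ j' ∈ Finset.univ.erase j,
          (X i j ω - (∑ k, X i k ω) / (n i : ℝ)) *
            (X i j' ω - (∑ k, X i k ω) / (n i : ℝ)) ∂P
      = (1 / ∑ i, ((n i : ℝ) - 1)) * ∫ ω, ∑ i, ∑ j, ∑ j' ∈ Finset.univ.erase j,
          (X i j ω - (∑ k, X i k ω) / (n i : ℝ)) *
            (X i j' ω - (∑ k, X i k ω) / (n i : ℝ)) ∂P := integral_const_mul _ _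
    _ = (1 / ∑ i, ((n i : ℝ) - 1)) * ∑ i, ((n i : ℝ) - 1) * ((ρ - 1) * σ2) := by
        rw [integral_finset_sum _ fun i _ => integrable_finset_sum _ fun j _ =>
          integrable_finset_sum _ fun j' _ => hintterm i j j']
        rw [Finset.sum_congr rfl fun i _ => hinner i]
    _ = (ρ - 1) * σ2 := by
        rw [← Finset.sum_mul, one_div]
        exact inv_mul_cancel_left₀ hT _
end

section
/- (Theorem 1, S1 part, exact form) Under the multi-user model with mean 0, E[S_1] = σ²(1 − ρ·∑_i n_i(n_i−1)/((∑_i n_i)(∑_i n_i − 1))), where S_1 = (1/(∑ n_i − 1)) ∑_i ∑_j (X_{ij} − R̄^A)² and R̄^A = (∑_i ∑_j X_{ij})/(∑_i n_i). -/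
open MeasureTheory Finset

/-!
Expanding the square, `∑ (X - X̄)² = ∑ X² - (∑ X)² / M` with `M = ∑ nᵢ`, so by linearity `E[S₁]`
only involves the second moments `E[X_{ij} X_{i'j'}]`. The diagonal ones contribute `M σ²`,
and `E[(∑ X)²]` is a sum of blocks, one per user, each equal to `nᵢ σ² + nᵢ (nᵢ - 1) ρ σ²`,
since observations of different users are uncorrelated.
-/

theorem Finset.sum_sq_sub_mean {ι : Type*} (s : Finset ι) (x : ι → ℝ) :
    ∑ k ∈ s, (x k - (∑ l ∈ s, x l) / #s) ^ 2 = ∑ k ∈ s, x k ^ 2 - (∑ k ∈ s, x k) ^ 2 / #s := by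
  rcases s.eq_empty_or_nonempty with rfl | hs
  · simp
  have hcard : (#s : ℝ) ≠ 0 := by exact_mod_cast hs.card_pos.ne'
  simp only [sub_sq, sum_add_distrib, sum_sub_distrib, ← sum_mul, ← mul_sum, sum_const,
    nsmul_eq_mul]
  field_simp
  ring

theorem integral_sum_sq_sub_mean {Ω ι : Type*} [MeasurableSpace Ω] {μ : Measure Ω}
    (s : Finset ι) (Y : ι → Ω → ℝ)
    (hY : ∀ k ∈ s, ∀ l ∈ s, Integrable (fun ω => Y k ω * Y l ω) μ) :
    ∫ ω, ∑ k ∈ s, (Y k ω - (∑ l ∈ s, Y l ω) / #s) ^ 2 ∂μ =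
      ∑ k ∈ s, ∫ ω, Y k ω ^ 2 ∂μ - (∑ k ∈ s, ∑ l ∈ s, ∫ ω, Y k ω * Y l ω ∂μ) / #s := by
  have hsq : ∀ k ∈ s, Integrable (fun ω => Y k ω ^ 2) μ := fun k hk => by
    simpa only [sq] using hY k hk k hk
  have hrow : ∀ k ∈ s, Integrable (fun ω => ∑ l ∈ s, Y k ω * Y l ω) μ := fun k hk =>
    integrable_finsetSum _ fun l hl => hY k hk l hl
  simp_rw [Finset.sum_sq_sub_mean, sq (∑ k ∈ s, _), sum_mul_sum]
  rw [integral_sub (integrable_finsetSum _ hsq) ((integrable_finsetSum _ hrow).div_const _),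
    integral_div, integral_finsetSum _ hsq, integral_finsetSum _ hrow,
    sum_congr rfl fun k hk => integral_finsetSum _ fun l hl => hY k hk l hl]

theorem Fintype.sum_eq_add_card_sub_one_mul {ι : Type*} [Fintype ι] (f : ι → ℝ) (j : ι)
    {a b : ℝ} (hj : f j = a) (hne : ∀ j', j' ≠ j → f j' = b) :
    ∑ j', f j' = a + (Fintype.card ι - 1) * b := by
  classical
  rw [← add_sum_erase _ _ (mem_univ j),
    sum_eq_card_nsmul fun j' hj' => hne j' (ne_of_mem_erase hj'),
    card_erase_of_mem (mem_univ j), card_univ, nsmul_eq_mul,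
    Nat.cast_pred (Fintype.card_pos_iff.mpr ⟨j⟩), hj]

theorem Fintype.sum_sum_sum_sum_of_equicorrelated_blocks {ι : Type*} [Fintype ι] {κ : ι → Type*}
    [∀ i, Fintype (κ i)] (c : (i : ι) → κ i → (i' : ι) → κ i' → ℝ) {a b : ℝ}
    (hdiag : ∀ i j, c i j i j = a) (hwithin : ∀ i j j', j ≠ j' → c i j i j' = b)
    (hcross : ∀ i i', i ≠ i' → ∀ j j', c i j i' j' = 0) :
    ∑ i, ∑ j, ∑ i', ∑ j', c i j i' j' =
      ∑ i, Fintype.card (κ i) * (a + (Fintype.card (κ i) - 1) * b) := by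
  refine Fintype.sum_congr _ _ fun i => ?_
  have hrow : ∀ j, ∑ i', ∑ j', c i j i' j' = a + (Fintype.card (κ i) - 1) * b := fun j => by
    rw [Fintype.sum_eq_single i fun i' hi' =>
      Finset.sum_eq_zero fun j' _ => hcross i i' hi'.symm j j']
    exact Fintype.sum_eq_add_card_sub_one_mul _ j (hdiag i j) fun j' hj' =>
      hwithin i j j' hj'.symm
  rw [Fintype.sum_congr _ _ hrow, sum_const, card_univ, nsmul_eq_mul]

theorem expectation_S1_general {Ω : Type*} [MeasurableSpace Ω] (P : Measure Ω)
    (N : ℕ) (n : Fin N → ℕ)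
    (htot : 2 ≤ ∑ i, n i)
    (X : (i : Fin N) → Fin (n i) → Ω → ℝ) (σ2 ρ : ℝ)
    (hint2 : ∀ i j i' j', Integrable (fun ω => X i j ω * X i' j' ω) P)
    (hvar : ∀ i j, ∫ ω, (X i j ω) ^ 2 ∂P = σ2)
    (hcov : ∀ i, ∀ j j' : Fin (n i), j ≠ j' → ∫ ω, X i j ω * X i j' ω ∂P = ρ * σ2)
    (hcross : ∀ i i', i ≠ i' → ∀ (j : Fin (n i)) (j' : Fin (n i')),
      ∫ ω, X i j ω * X i' j' ω ∂P = 0) :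
    ∫ ω, (1 / ((∑ i, (n i : ℝ)) - 1)) *
        ∑ i, ∑ j, (X i j ω - (∑ i', ∑ j', X i' j' ω) / ∑ i', (n i' : ℝ)) ^ 2 ∂P =
      σ2 * (1 - ρ * (∑ i, (n i : ℝ) * ((n i : ℝ) - 1)) /
        ((∑ i, (n i : ℝ)) * ((∑ i, (n i : ℝ)) - 1))) := by
  set M : ℝ := ∑ i, (n i : ℝ)
  have hM : (2 : ℝ) ≤ M := by simp only [M]; exact_mod_cast htot
  let Y : (Σ i, Fin (n i)) → Ω → ℝ := fun k => X k.1 k.2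
  have hcard : M = #(univ : Finset (Σ i, Fin (n i))) := by
    simp only [M, card_univ, Fintype.card_sigma, Fintype.card_fin, Nat.cast_sum]
  have hflat : ∀ ω, ∑ i, ∑ j, (X i j ω - (∑ i', ∑ j', X i' j' ω) / M) ^ 2 =
      ∑ k, (Y k ω - (∑ l, Y l ω) / #(univ : Finset (Σ i, Fin (n i)))) ^ 2 := fun ω => by
    simp only [Y, Fintype.sum_sigma, hcard]
  simp_rw [hflat]
  rw [integral_const_mul, integral_sum_sq_sub_mean _ _ fun k _ l _ => hint2 _ _ _ _, ← hcard]
  simp only [Fintype.sum_sigma, hvar]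
  rw [Fintype.sum_sum_sum_sum_of_equicorrelated_blocks _
    (fun i j => by simpa only [sq] using hvar i j) hcov hcross]
  have hblock : ∑ i, (n i : ℝ) * (σ2 + (n i - 1) * (ρ * σ2)) =
      M * σ2 + ρ * σ2 * ∑ i, (n i : ℝ) * (n i - 1) := by
    rw [sum_mul, mul_sum, ← sum_add_distrib]
    exact sum_congr rfl fun i _ => by ring
  simp only [Fintype.card_fin, sum_const, card_univ, nsmul_eq_mul, ← sum_mul, hblock]
  have hM1 : M - 1 ≠ 0 := by linarith
  have hM0 : M ≠ 0 := by linarith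
  field_simp
  ring

/-- Theorem 1 (S1 part, exact form): E[S₁] = σ²(1 - ρ·∑nᵢ(nᵢ-1)/((∑nᵢ)(∑nᵢ-1))). -/
theorem expectation_S1 {Ω : Type*} [MeasurableSpace Ω] (P : Measure Ω)
    [IsProbabilityMeasure P] (N : ℕ) (n : Fin N → ℕ) (hn : ∀ i, 1 ≤ n i)
    (htot : 2 ≤ ∑ i, n i)
    (X : (i : Fin N) → Fin (n i) → Ω → ℝ) (σ2 ρ : ℝ)
    (hint1 : ∀ i j, Integrable (X i j) P)
    (hint2 : ∀ i j i' j', Integrable (fun ω => X i j ω * X i' j' ω) P)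
    (hmean : ∀ i j, ∫ ω, X i j ω ∂P = 0)
    (hvar : ∀ i j, ∫ ω, (X i j ω) ^ 2 ∂P = σ2)
    (hcov : ∀ i, ∀ j j' : Fin (n i), j ≠ j' → ∫ ω, X i j ω * X i j' ω ∂P = ρ * σ2)
    (hcross : ∀ i i', i ≠ i' → ∀ (j : Fin (n i)) (j' : Fin (n i')),
      ∫ ω, X i j ω * X i' j' ω ∂P = 0) :
    ∫ ω, (1 / ((∑ i, (n i : ℝ)) - 1)) *
        ∑ i, ∑ j, (X i j ω - (∑ i', ∑ j', X i' j' ω) / ∑ i', (n i' : ℝ)) ^ 2 ∂P =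
      σ2 * (1 - ρ * (∑ i, (n i : ℝ) * ((n i : ℝ) - 1)) /
        ((∑ i, (n i : ℝ)) * ((∑ i, (n i : ℝ)) - 1))) :=
  expectation_S1_general P N n htot X σ2 ρ hint2 hvar hcov hcross
end
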